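/- arXiv:2203.13575 — 2 statements merged into one kernel-verified Lean document; each statement's English description precedes it below -/
import Mathlib

section
/- Let Γ be a finite nilpotent group and Σ a subgroup of Γ. Let δ be an element of Γ such that δΣδ⁻¹ ≠ Σ. If ΣδΣ = Σδ⁻¹Σ (as double cosets), then the index |Σ : Σ ∩ δΣδ⁻¹| is even. -/
/-- The double coset ΣδΣ = {a * δ * b : a, b ∈ Σ}. -/
def doubleCoset {Γ : Type*} [Group Γ] (S : Subgroup Γ) (δ : Γ) : Set Γ :=
  {x | ∃ a ∈ S, ∃ b ∈ S, x = a * δ * b}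

/-!
Let `T` be the Sylow `2`-subgroup of `Γ`; it is normal, and `Γ ⧸ T` has odd order. In a group of
odd order a double coset `HgH` has odd size and is stable under inversion when
`HgH = Hg⁻¹H`, so inversion fixes one of its elements; that element is `1`, whence `g ∈ H`.
Applied in `Γ ⧸ T` this writes `δ = t * s` with `t ∈ T` and `s ∈ S`, so `δSδ⁻¹ = tSt⁻¹`. In a
nilpotent group the `2`-element `t` commutes with every element of odd prime power order, so
`S ∩ tSt⁻¹` contains a Sylow `q`-subgroup of `S` for each odd prime `q`, and the index is a power
of `2`. If it were odd it would be `1`, forcing `tSt⁻¹ = S`.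
-/

section OddOrder

variable {G : Type*} [Group G]

lemma image_doubleCoset {H : Type*} [Group H] (f : G →* H) (S : Subgroup G) (g : G) :
    f '' doubleCoset S g = doubleCoset (S.map f) (f g) := by
  ext x
  simp only [doubleCoset, Set.mem_image, Set.mem_ofPred_eq, Subgroup.mem_map]
  constructor
  · rintro ⟨_, ⟨a, ha, b, hb, rfl⟩, rfl⟩
    exact ⟨f a, ⟨a, ha, rfl⟩, f b, ⟨b, hb, rfl⟩, by simp⟩
  · rintro ⟨_, ⟨a, ha, rfl⟩, _, ⟨b, hb, rfl⟩, rfl⟩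
    exact ⟨a * g * b, ⟨a, ha, b, hb, rfl⟩, by simp⟩

lemma inv_mem_doubleCoset_inv {S : Subgroup G} {g x : G} (hx : x ∈ doubleCoset S g) :
    x⁻¹ ∈ doubleCoset S g⁻¹ := by
  obtain ⟨a, ha, b, hb, rfl⟩ := hx
  exact ⟨b⁻¹, S.inv_mem hb, a⁻¹, S.inv_mem ha, by group⟩

lemma natCard_doubleCoset_dvd [Finite G] (S : Subgroup G) (g : G) :
    Nat.card (doubleCoset S g) ∣ Nat.card S * Nat.card S := by
  let := MulAction.prodOfSMulCommClass S S.op G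
  have horbit : MulAction.orbit (S × S.op) g = doubleCoset S g := by
    ext x
    constructor
    · rintro ⟨⟨a, b⟩, rfl⟩
      exact ⟨a, a.2, b.1.unop, b.2, (mul_assoc _ _ _).symm⟩
    · rintro ⟨a, ha, b, hb, rfl⟩
      exact ⟨(⟨a, ha⟩, ⟨MulOpposite.op b, hb⟩), (mul_assoc _ _ _).symm⟩
  rw [← horbit, Nat.card_coe_set_eq, ← MulAction.index_stabilizer, ← Nat.card_prod,
    Nat.card_congr ((Equiv.refl S).prodCongr S.equivOp)]
  exact Subgroup.index_dvd_card _

lemma exists_inv_eq_self_of_odd_natCard {α : Type*} [InvolutiveInv α] {s : Set α} [Finite s]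
    (hs : Odd (Nat.card s)) (hinv : ∀ x ∈ s, x⁻¹ ∈ s) : ∃ x ∈ s, x⁻¹ = x := by
  have := Fintype.ofFinite s
  let σ : Equiv.Perm s := Function.Involutive.toPerm (fun x ↦ ⟨x.1⁻¹, hinv x.1 x.2⟩)
    fun x ↦ Subtype.ext (inv_inv x.1)
  obtain ⟨⟨x, hx⟩, hσx⟩ := Equiv.Perm.exists_fixed_point_of_prime (p := 2) (n := 1) (σ := σ)
    (by rwa [← Nat.card_eq_fintype_card, ← even_iff_two_dvd, Nat.not_even_iff_odd])
    (by rw [pow_one, sq]; exact Equiv.ext fun x ↦ Subtype.ext (inv_inv x.1))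
  exact ⟨x, hx, congrArg Subtype.val hσx⟩

lemma eq_one_of_inv_eq_self [Finite G] (hG : Odd (Nat.card G)) {x : G} (hx : x⁻¹ = x) :
    x = 1 := by
  have hx2 : orderOf x ∣ 2 := orderOf_dvd_of_pow_eq_one (by rw [sq, ← inv_eq_iff_mul_eq_one, hx])
  rw [← orderOf_eq_one_iff]
  exact ((Nat.coprime_two_left.2 hG).coprime_dvd_left hx2).eq_one_of_dvd (orderOf_dvd_natCard x)

theorem mem_of_doubleCoset_eq_doubleCoset_inv [Finite G] (hG : Odd (Nat.card G))
    {S : Subgroup G} {g : G} (h : doubleCoset S g = doubleCoset S g⁻¹) : g ∈ S := by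
  have hS : Odd (Nat.card S) := hG.of_dvd_nat (Subgroup.card_subgroup_dvd_card S)
  obtain ⟨x, ⟨a, ha, b, hb, rfl⟩, hx⟩ := exists_inv_eq_self_of_odd_natCard
    ((hS.mul hS).of_dvd_nat (natCard_doubleCoset_dvd S g))
    fun x hx ↦ h ▸ inv_mem_doubleCoset_inv hx
  have hg : g = a⁻¹ * (a * g * b) * b⁻¹ := by group
  rw [hg, eq_one_of_inv_eq_self hG hx, mul_one]
  exact S.mul_mem (S.inv_mem ha) (S.inv_mem hb)

theorem exists_mem_mul_mem_of_doubleCoset_eq_doubleCoset_inv {N : Subgroup G} [N.Normal]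
    (hN : Odd N.index) {S : Subgroup G} {g : G} (h : doubleCoset S g = doubleCoset S g⁻¹) :
    ∃ n ∈ N, ∃ s ∈ S, n * s = g := by
  have : N.FiniteIndex := ⟨hN.pos.ne'⟩
  let π := QuotientGroup.mk' N
  obtain ⟨s, hs, hsg⟩ : π g ∈ S.map π := mem_of_doubleCoset_eq_doubleCoset_inv hN <| by
    rw [← image_doubleCoset, h, image_doubleCoset, map_inv]
  refine ⟨g * s⁻¹, ?_, s, hs, inv_mul_cancel_right g s⟩
  rw [← div_eq_mul_inv, ← QuotientGroup.eq_iff_div_mem]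
  exact hsg.symm

end OddOrder

section Conjugation

variable {G : Type*} [Group G]

lemma map_conj_mul_of_mem {S : Subgroup G} {s : G} (hs : s ∈ S) (t : G) :
    S.map (MulAut.conj (t * s)).toMonoidHom = S.map (MulAut.conj t).toMonoidHom := by
  have hsS : S.map (MulAut.conj s).toMonoidHom = S :=
    Subgroup.mem_normalizer_iff_map_conj_eq.1 (Subgroup.le_normalizer hs)
  rw [← congrArg (Subgroup.map (MulAut.conj t).toMonoidHom) hsS, Subgroup.map_map, map_mul]
  rfl

lemma map_conj_eq_of_relIndex_eq_one [Finite G] {S : Subgroup G} {g : G}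
    (h : (S.map (MulAut.conj g).toMonoidHom).relIndex S = 1) :
    S.map (MulAut.conj g).toMonoidHom = S := by
  refine (Subgroup.eq_of_le_of_card_ge (Subgroup.relIndex_eq_one.1 h) ?_).symm
  rw [Subgroup.card_map_of_injective (MulAut.conj g).injective]

variable [Finite G] [Group.IsNilpotent G]

lemma commute_of_isPGroup_of_ne {p q : ℕ} [Fact p.Prime] [Fact q.Prime] (hpq : p ≠ q)
    {H K : Subgroup G} (hH : IsPGroup p H) (hK : IsPGroup q K) {x y : G} (hx : x ∈ H)
    (hy : y ∈ K) : Commute x y := by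
  obtain ⟨P, hHP⟩ := hH.exists_le_sylow
  obtain ⟨Q, hKQ⟩ := hK.exists_le_sylow
  exact Subgroup.commute_of_normal_of_disjoint _ _ inferInstance inferInstance
    (IsPGroup.disjoint_of_ne p q hpq _ _ P.isPGroup' Q.isPGroup') x y (hHP hx) (hKQ hy)

lemma not_dvd_relIndex_map_conj {p q : ℕ} [Fact p.Prime] [Fact q.Prime] (hpq : p ≠ q)
    {H : Subgroup G} (hH : IsPGroup p H) {t : G} (ht : t ∈ H) (S : Subgroup G) :
    ¬ q ∣ (S.map (MulAut.conj t).toMonoidHom).relIndex S := by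
  obtain ⟨Q⟩ : Nonempty (Sylow q S) := inferInstance
  have hQ : (Q : Subgroup S) ≤ (S.map (MulAut.conj t).toMonoidHom).subgroupOf S := by
    intro x hx
    have htx : Commute t x :=
      commute_of_isPGroup_of_ne hpq hH (Q.isPGroup'.map S.subtype) ht ⟨x, hx, rfl⟩
    exact ⟨x, x.2, by simp [MulAut.conj_apply, htx.eq]⟩
  exact fun h ↦ Q.not_dvd_index (h.trans (Subgroup.index_dvd_of_le hQ))

end Conjugation

/-- Let Γ be a finite nilpotent group and Σ a subgroup of Γ. Let δ be an element of Γ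
such that δΣδ⁻¹ ≠ Σ. If ΣδΣ = Σδ⁻¹Σ, then the index |Σ : Σ ∩ δΣδ⁻¹| is even. -/
theorem stmt0 {Γ : Type*} [Group Γ] [Finite Γ] [Group.IsNilpotent Γ]
    (S : Subgroup Γ) (δ : Γ)
    (hconj : Subgroup.map (MulAut.conj δ).toMonoidHom S ≠ S)
    (hdc : doubleCoset S δ = doubleCoset S δ⁻¹) :
    Even ((Subgroup.map (MulAut.conj δ).toMonoidHom S).relIndex S) := by
  obtain ⟨T⟩ : Nonempty (Sylow 2 Γ) := inferInstance
  obtain ⟨t, ht, s, hs, rfl⟩ := exists_mem_mul_mem_of_doubleCoset_eq_doubleCoset_inv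
    (Nat.not_even_iff_odd.1 (even_iff_two_dvd.not.2 T.not_dvd_index)) hdc
  rw [map_conj_mul_of_mem hs] at hconj ⊢
  by_contra hn
  refine hconj (map_conj_eq_of_relIndex_eq_one (Nat.eq_one_iff_not_exists_prime_dvd.2 ?_))
  intro q hq
  rcases eq_or_ne q 2 with rfl | hq2
  · exact (Nat.not_even_iff_odd.1 hn).not_two_dvd_nat
  · have := Fact.mk hq
    exact not_dvd_relIndex_map_conj hq2.symm T.isPGroup' ht S
end

section
/- If a finite graph G is a multicover of a graph G̃ and G̃ admits a nowhere-zero k-flow for some k ≥ 2, then G admits a nowhere-zero k-flow. -/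
/-- A multigraph: an abstract edge set `E` together with an assignment of an unordered
pair of end-vertices to each edge. Loops and parallel edges are allowed. -/
structure Multigraph (V E : Type*) where
  ends : E → Sym2 V

namespace Multigraph

variable {V E : Type*}

/-- A multigraph is loopless if no edge is a loop. -/
def Loopless (G : Multigraph V E) : Prop := ∀ e, ¬ (G.ends e).IsDiag

/-- Two vertices are adjacent if some edge joins them. -/
def Adj (G : Multigraph V E) (v w : V) : Prop := ∃ e, G.ends e = s(v, w)

/-- A multigraph is connected if any two vertices are joined by a walk. -/
def Connected (G : Multigraph V E) : Prop := ∀ v w : V, Relation.ReflTransGen G.Adj v w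

open Classical in
/-- The number of times edge `e` is incident with vertex `v` (a loop counts twice). -/
noncomputable def incCount (G : Multigraph V E) (v : V) (e : E) : ℕ :=
  if G.ends e = Sym2.diag v then 2 else if v ∈ G.ends e then 1 else 0

/-- The degree of a vertex. -/
noncomputable def degree (G : Multigraph V E) [Fintype E] (v : V) : ℕ :=
  ∑ e, G.incCount v e

open Classical in
/-- The degree of a vertex in the spanning subgraph with edge set `S`. -/
noncomputable def degreeIn (G : Multigraph V E) [Fintype E] (S : Set E) (v : V) : ℕ :=
  ∑ e, if e ∈ S then G.incCount v e else 0

/-- An orientation of a multigraph: each edge gets a tail and a head realizing its ends. -/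
structure Orientation (G : Multigraph V E) where
  tail : E → V
  head : E → V
  consistent : ∀ e, G.ends e = s(tail e, head e)

open Classical in
/-- Sum of `φ` over the edges with tail `v`. -/
noncomputable def outflow [Fintype E] {G : Multigraph V E} (D : G.Orientation)
    (φ : E → ℤ) (v : V) : ℤ :=
  ∑ e, if D.tail e = v then φ e else 0

open Classical in
/-- Sum of `φ` over the edges with head `v`. -/
noncomputable def inflow [Fintype E] {G : Multigraph V E} (D : G.Orientation)
    (φ : E → ℤ) (v : V) : ℤ :=
  ∑ e, if D.head e = v then φ e else 0

/-- `(D, φ)` is a `k`-flow: all values have absolute value `< k` and flow is conserved. -/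
def IsFlow [Fintype E] {G : Multigraph V E} (D : G.Orientation) (φ : E → ℤ) (k : ℕ) : Prop :=
  (∀ e, |φ e| < (k : ℤ)) ∧ ∀ v : V, outflow D φ v = inflow D φ v

/-- `G` admits a nowhere-zero `k`-flow. -/
def HasNowhereZeroFlow (G : Multigraph V E) [Fintype E] (k : ℕ) : Prop :=
  ∃ (D : G.Orientation) (φ : E → ℤ), IsFlow D φ k ∧ ∀ e, φ e ≠ 0

/-- The automorphism group of a multigraph, as a subgroup of `Perm V × Perm E`:
pairs of permutations compatible with the incidence structure. -/
def aut (G : Multigraph V E) : Subgroup (Equiv.Perm V × Equiv.Perm E) where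
  carrier := {p | ∀ e, G.ends (p.2 e) = (G.ends e).map p.1}
  one_mem' := by
    intro e
    simp
  mul_mem' := by
    intro p q hp hq e
    have h1 := hp (q.2 e)
    have h2 := hq e
    simp only [Prod.snd_mul, Prod.fst_mul, Equiv.Perm.mul_apply, Equiv.Perm.coe_mul]
    rw [h1, h2, Sym2.map_map]
  inv_mem' := by
    intro p hp e
    have h := hp ((p.2)⁻¹ e)
    simp only [Equiv.Perm.coe_inv, Equiv.apply_symm_apply] at h
    rw [Prod.snd_inv, Prod.fst_inv, h, Sym2.map_map]
    have : (⇑(p.1)⁻¹ ∘ ⇑p.1) = id := by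
      ext x; simp
    rw [this, Sym2.map_id, id_eq]
    rfl

end Multigraph

/-!
Orient each edge of `G` along the orientation of its image in `G'` and give it the flow value
of its image. Since `G'` is loopless, the tail of an edge `e` of `G` is its unique end lying over
the tail of `fE e`. So at a vertex `v`, the edges leaving `v` over a given edge `e'` of `G'` are
all `ℓ` edges at `v` over `e'` if `e'` leaves `fV v`, and there are none otherwise. Hence the
outflow and the inflow at `v` are `ℓ` times those at `fV v`, and conservation lifts.
-/

open Finset

namespace Multigraph

variable {V E V' E' : Type*} {G : Multigraph V E} {G' : Multigraph V' E'}
  {fV : V → V'} {fE : E → E'}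

def IsHom (G : Multigraph V E) (G' : Multigraph V' E') (fV : V → V') (fE : E → E') : Prop :=
  ∀ e, G'.ends (fE e) = (G.ends e).map fV

def HasLocalMultiplicity (G : Multigraph V E) (G' : Multigraph V' E') (fV : V → V')
    (fE : E → E') (ℓ : ℕ) : Prop :=
  ∀ (v : V) (e' : E'), fV v ∈ G'.ends e' → Nat.card {e : E // fE e = e' ∧ v ∈ G.ends e} = ℓ

theorem IsHom.exists_lift_ends (hhom : IsHom G G' fV fE) (D' : G'.Orientation) (e : E) :
    ∃ a b, G.ends e = s(a, b) ∧ fV a = D'.tail (fE e) ∧ fV b = D'.head (fE e) := by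
  obtain ⟨a, b, hab⟩ : ∃ a b, G.ends e = s(a, b) := Sym2.exists.mp ⟨G.ends e, rfl⟩
  have h : s(D'.tail (fE e), D'.head (fE e)) = s(fV a, fV b) := by
    rw [← D'.consistent, hhom, hab, Sym2.map_mk]
  rcases Sym2.eq_iff.mp h with ⟨ha, hb⟩ | ⟨hb, ha⟩
  · exact ⟨a, b, hab, ha.symm, hb.symm⟩
  · exact ⟨b, a, hab.trans Sym2.eq_swap, hb.symm, ha.symm⟩

namespace Orientation

theorem tail_mem (D : G.Orientation) (e : E) : D.tail e ∈ G.ends e := by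
  rw [D.consistent]
  exact Sym2.mem_mk_left _ _

theorem head_mem (D : G.Orientation) (e : E) : D.head e ∈ G.ends e := by
  rw [D.consistent]
  exact Sym2.mem_mk_right _ _

theorem tail_ne_head (hG : G.Loopless) (D : G.Orientation) (e : E) : D.tail e ≠ D.head e :=
  fun h => hG e (by rw [D.consistent, h]; exact Sym2.mk_isDiag_iff.mpr rfl)

noncomputable def pullback (D' : G'.Orientation) (hhom : IsHom G G' fV fE) : G.Orientation where
  tail e := (hhom.exists_lift_ends D' e).choose
  head e := (hhom.exists_lift_ends D' e).choose_spec.choose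
  consistent e := (hhom.exists_lift_ends D' e).choose_spec.choose_spec.1

variable {D' : G'.Orientation} {hhom : IsHom G G' fV fE}

theorem map_pullback_tail (e : E) : fV ((D'.pullback hhom).tail e) = D'.tail (fE e) :=
  (hhom.exists_lift_ends D' e).choose_spec.choose_spec.2.1

theorem map_pullback_head (e : E) : fV ((D'.pullback hhom).head e) = D'.head (fE e) :=
  (hhom.exists_lift_ends D' e).choose_spec.choose_spec.2.2

theorem pullback_tail_eq_iff (hG' : G'.Loopless) {e : E} {v : V} :
    (D'.pullback hhom).tail e = v ↔ v ∈ G.ends e ∧ fV v = D'.tail (fE e) := by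
  refine ⟨fun h => h ▸ ⟨tail_mem _ e, map_pullback_tail e⟩, fun ⟨hv, hfv⟩ => ?_⟩
  rw [(D'.pullback hhom).consistent, Sym2.mem_iff] at hv
  rcases hv with rfl | rfl
  · rfl
  · exact absurd (hfv.symm.trans (map_pullback_head e)) (D'.tail_ne_head hG' _)

theorem pullback_head_eq_iff (hG' : G'.Loopless) {e : E} {v : V} :
    (D'.pullback hhom).head e = v ↔ v ∈ G.ends e ∧ fV v = D'.head (fE e) := by
  refine ⟨fun h => h ▸ ⟨head_mem _ e, map_pullback_head e⟩, fun ⟨hv, hfv⟩ => ?_⟩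
  rw [(D'.pullback hhom).consistent, Sym2.mem_iff] at hv
  rcases hv with rfl | rfl
  · exact absurd ((map_pullback_tail e).symm.trans hfv) (D'.tail_ne_head hG' _)
  · rfl

end Orientation

variable {ℓ : ℕ} {t : E → V} {t' : E' → V'}

theorem HasLocalMultiplicity.card_fiber_eq_ite (hmulti : G.HasLocalMultiplicity G' fV fE ℓ)
    (ht : ∀ e v, t e = v ↔ v ∈ G.ends e ∧ fV v = t' (fE e)) (ht' : ∀ e', t' e' ∈ G'.ends e')
    (v : V) (e' : E') [Decidable (t' e' = fV v)] :
    Nat.card {e : E // fE e = e' ∧ t e = v} = if t' e' = fV v then ℓ else 0 := by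
  split_ifs with h
  · rw [← hmulti v e' (h ▸ ht' e')]
    refine Nat.card_congr (Equiv.subtypeEquivRight fun e => ?_)
    rw [ht]
    constructor
    · rintro ⟨rfl, hv, -⟩
      exact ⟨rfl, hv⟩
    · rintro ⟨rfl, hv⟩
      exact ⟨rfl, hv, h.symm⟩
  · rw [Nat.card_eq_zero]
    refine Or.inl ⟨?_⟩
    rintro ⟨e, rfl, hte⟩
    exact h ((ht e v).mp hte).2.symm

open Classical in
theorem HasLocalMultiplicity.sum_ite_eq_mul [Fintype E] [Fintype E']
    (hmulti : G.HasLocalMultiplicity G' fV fE ℓ)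
    (ht : ∀ e v, t e = v ↔ v ∈ G.ends e ∧ fV v = t' (fE e)) (ht' : ∀ e', t' e' ∈ G'.ends e')
    (ψ : E' → ℤ) (v : V) :
    ∑ e, (if t e = v then ψ (fE e) else 0) = ℓ * ∑ e', if t' e' = fV v then ψ e' else 0 := by
  have hcard (e' : E') : #{e | t e = v ∧ fE e = e'} = if t' e' = fV v then ℓ else 0 := by
    rw [← hmulti.card_fiber_eq_ite ht ht' v e', Nat.card_eq_fintype_card, Fintype.card_subtype]
    simp only [and_comm]
  rw [← sum_filter, ← sum_fiberwise' _ fE, mul_sum]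
  refine sum_congr rfl fun e' _ => ?_
  rw [sum_const, filter_filter, hcard, nsmul_eq_mul]
  split_ifs <;> simp

variable [Fintype E] [Fintype E']

theorem outflow_pullback (hG' : G'.Loopless) (hhom : IsHom G G' fV fE)
    (hmulti : G.HasLocalMultiplicity G' fV fE ℓ) (D' : G'.Orientation) (φ' : E' → ℤ) (v : V) :
    outflow (D'.pullback hhom) (φ' ∘ fE) v = ℓ * outflow D' φ' (fV v) :=
  hmulti.sum_ite_eq_mul (fun _ _ => Orientation.pullback_tail_eq_iff hG') D'.tail_mem φ' v

theorem inflow_pullback (hG' : G'.Loopless) (hhom : IsHom G G' fV fE)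
    (hmulti : G.HasLocalMultiplicity G' fV fE ℓ) (D' : G'.Orientation) (φ' : E' → ℤ) (v : V) :
    inflow (D'.pullback hhom) (φ' ∘ fE) v = ℓ * inflow D' φ' (fV v) :=
  hmulti.sum_ite_eq_mul (fun _ _ => Orientation.pullback_head_eq_iff hG') D'.head_mem φ' v

theorem IsFlow.pullback (hG' : G'.Loopless) (hhom : IsHom G G' fV fE)
    (hmulti : G.HasLocalMultiplicity G' fV fE ℓ)
    {D' : G'.Orientation} {φ' : E' → ℤ} {k : ℕ} (h : IsFlow D' φ' k) :
    IsFlow (D'.pullback hhom) (φ' ∘ fE) k := by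
  refine ⟨fun e => h.1 (fE e), fun v => ?_⟩
  rw [outflow_pullback hG' hhom hmulti, inflow_pullback hG' hhom hmulti, h.2]

end Multigraph

open Multigraph in
theorem stmt8_general {V E V' E' : Type*} [Fintype E] [Fintype E']
    (G : Multigraph V E) (G' : Multigraph V' E')
    (hloopless : G'.Loopless)
    (fV : V → V') (fE : E → E')
    (hhom : ∀ e, G'.ends (fE e) = (G.ends e).map fV)
    (ℓ : ℕ)
    (hmulti : ∀ (v : V) (e' : E'), fV v ∈ G'.ends e' →
      Nat.card {e : E // fE e = e' ∧ v ∈ G.ends e} = ℓ)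
    (k : ℕ)
    (hflow : G'.HasNowhereZeroFlow k) :
    G.HasNowhereZeroFlow k := by
  obtain ⟨D', φ', hD', hφ'⟩ := hflow
  exact ⟨D'.pullback hhom, φ' ∘ fE, hD'.pullback hloopless hhom hmulti, fun e => hφ' (fE e)⟩

open Multigraph in
/-- If a finite graph G is a multicover of a (loopless) graph G' and G' admits a
nowhere-zero k-flow for some k ≥ 2, then G admits a nowhere-zero k-flow. -/
theorem stmt8 {V E V' E' : Type*} [Fintype E] [Fintype E']
    (G : Multigraph V E) (G' : Multigraph V' E')
    (hloopless : G'.Loopless)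
    (fV : V → V') (fE : E → E')
    (hhom : ∀ e, G'.ends (fE e) = (G.ends e).map fV)
    (hsurjV : Function.Surjective fV) (hsurjE : Function.Surjective fE)
    (ℓ : ℕ) (hl : 1 ≤ ℓ)
    (hmulti : ∀ (v : V) (e' : E'), fV v ∈ G'.ends e' →
      Nat.card {e : E // fE e = e' ∧ v ∈ G.ends e} = ℓ)
    (k : ℕ) (hk : 2 ≤ k)
    (hflow : G'.HasNowhereZeroFlow k) :
    G.HasNowhereZeroFlow k :=
  stmt8_general G G' hloopless fV fE hhom ℓ hmulti k hflow
end
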